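/- Let A=(S,R) be a finite argumentation network and let h be an assignment of G3 truth values to the atoms S such that t ⊨_h φ for every formula φ in the theory Δ_A. Then the labelling λ_h (defined by λ_h(x)=in if h(x)=(⊤,⊤), out if h(x)=(⊥,⊥), und if h(x)=(⊥,⊤)) is a complete extension of A. -/

import Mathlib

/-- The three Caminada labels. -/
inductive Label where
  | in_ : Label
  | out : Label
  | und : Label
deriving DecidableEq

/-- Propositional intuitionistic formulas over atoms `α`, with the
distinguished constant `nconst` (the paper's `n`). -/
inductive Form (α : Type) where
  | atom : α → Form α
  | nconst : Form α
  | top : Form α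
  | bot : Form α
  | and : Form α → Form α → Form α
  | or : Form α → Form α → Form α
  | imp : Form α → Form α → Form α
  | neg : Form α → Form α

/-- Forcing in the two-world Kripke model: world `false` is `t`, world `true`
is `s`, with `t < s` (i.e. the Bool order). `h` assigns to each atom its pair
of truth values (at `t`, at `s`). The constant `n` has value `(⊥,⊤)`. -/
def force {α : Type} (h : α → Bool × Bool) : Bool → Form α → Prop
  | w, .atom x => (if w then (h x).2 else (h x).1) = true
  | w, .nconst => w = true
  | _, .top => True
  | _, .bot => False
  | w, .and A B => force h w A ∧ force h w B
  | w, .or A B => force h w A ∨ force h w B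
  | w, .imp A B => ∀ v : Bool, w ≤ v → force h v A → force h v B
  | w, .neg A => ∀ v : Bool, w ≤ v → ¬ force h v A

/-- An assignment is legitimate when no atom gets the forbidden value `(⊤,⊥)`. -/
def Persistent {α : Type} (h : α → Bool × Bool) : Prop :=
  ∀ x, (h x).1 = true → (h x).2 = true

def bigAnd {α : Type} : List (Form α) → Form α
  | [] => .top
  | f :: fs => .and f (bigAnd fs)

def bigOr {α : Type} : List (Form α) → Form α
  | [] => .bot
  | f :: fs => .or f (bigOr fs)

/-- The list of attackers of `x` in the network `(α, R)`. -/
noncomputable def attackers {α : Type} [Fintype α] (R : α → α → Prop) [DecidableRel R] (x : α) : List α :=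
  (Finset.univ.filter (fun y => R y x)).toList

/-- (a1)  `x → (n ∨ ⋀_{yRx} ¬y)` -/
noncomputable def fa1 {α : Type} [Fintype α] (R : α → α → Prop) [DecidableRel R] (x : α) : Form α :=
  .imp (.atom x) (.or .nconst (bigAnd ((attackers R x).map (fun y => .neg (.atom y)))))

/-- (a2)  `(⋀_{yRx} ¬y) → (n ∨ x)` -/
noncomputable def fa2 {α : Type} [Fintype α] (R : α → α → Prop) [DecidableRel R] (x : α) : Form α :=
  .imp (bigAnd ((attackers R x).map (fun y => .neg (.atom y)))) (.or .nconst (.atom x))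

/-- (b1)  `¬x → (n ∨ ⋁_{yRx} y)` -/
noncomputable def fb1 {α : Type} [Fintype α] (R : α → α → Prop) [DecidableRel R] (x : α) : Form α :=
  .imp (.neg (.atom x)) (.or .nconst (bigOr ((attackers R x).map (fun y => .atom y))))

/-- (b2)  `(⋁_{yRx} y) → (¬x ∨ n)` -/
noncomputable def fb2 {α : Type} [Fintype α] (R : α → α → Prop) [DecidableRel R] (x : α) : Form α :=
  .imp (bigOr ((attackers R x).map (fun y => .atom y))) (.or (.neg (.atom x)) .nconst)

/-- `h` is a model of the theory `Δ_A`: every formula of `Δ_A` holds at `t`. -/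
def ModelsDelta {α : Type} [Fintype α] (h : α → Bool × Bool)
    (R : α → α → Prop) [DecidableRel R] : Prop :=
  ∀ x, force h false (fa1 R x) ∧ force h false (fa2 R x) ∧
    force h false (fb1 R x) ∧ force h false (fb2 R x)

/-- Caminada labelling / complete extension of the network `(α, R)`. -/
def IsCompleteExt {α : Type} (R : α → α → Prop) (l : α → Label) : Prop :=
  (∀ x, l x = .in_ ↔ ∀ y, R y x → l y = .out) ∧
  (∀ x, l x = .out ↔ ∃ y, R y x ∧ l y = .in_) ∧
  (∀ x, l x = .und ↔ ((∀ y, R y x → l y ≠ .in_) ∧ ∃ y, R y x ∧ l y = .und))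

/-- The labelling `λ_h` induced by an assignment `h`. -/
def lamOf {α : Type} (h : α → Bool × Bool) (x : α) : Label :=
  if h x = (true, true) then .in_ else if h x = (false, false) then .out else .und

/-- The assignment `h_λ` induced by a labelling `λ`. -/
def assignOf {α : Type} (l : α → Label) (x : α) : Bool × Bool :=
  match l x with
  | .in_ => (true, true)
  | .out => (false, false)
  | .und => (false, true)

/-!
Every formula of `Δ_A` is an implication whose conclusion has `n` as a disjunct. Since `n` fails
at `t`, while the antecedents and the other disjuncts are forced at `t` exactly when their
classical readings about `λ_h` hold (persistence is what makes `t ⊨ x` mean `λ_h(x) = in`),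
forcing `Δ_A` at `t` gives conditions (C1) and (C2). Condition (C3) follows from these two for
any three-valued labelling.
-/

theorem IsCompleteExt.of_in_iff_of_out_iff {α : Type} {R : α → α → Prop} {l : α → Label}
    (hin : ∀ x, l x = .in_ ↔ ∀ y, R y x → l y = .out)
    (hout : ∀ x, l x = .out ↔ ∃ y, R y x ∧ l y = .in_) :
    IsCompleteExt R l := by
  have hund : ∀ z, l z = .und ↔ l z ≠ .in_ ∧ l z ≠ .out := fun z => by cases l z <;> simp
  refine ⟨hin, hout, fun x => ?_⟩
  rw [hund, ne_eq, hin, ne_eq, hout]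
  push Not
  constructor
  · rintro ⟨⟨y, hyx, hy⟩, hnin⟩
    exact ⟨hnin, y, hyx, (hund y).2 ⟨hnin y hyx, hy⟩⟩
  · rintro ⟨hnin, y, hyx, hy⟩
    exact ⟨⟨y, hyx, by simp [hy]⟩, hnin⟩

section Forcing

variable {α : Type} {h : α → Bool × Bool}

lemma lamOf_eq_in_iff {x : α} : lamOf h x = .in_ ↔ h x = (true, true) := by
  unfold lamOf; split_ifs <;> simp_all

lemma lamOf_eq_out_iff {x : α} : lamOf h x = .out ↔ h x = (false, false) := by
  unfold lamOf; split_ifs <;> simp_all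

lemma not_force_false_nconst : ¬ force h false (.nconst : Form α) := by
  simp [force]

lemma force_false_atom_iff (hp : Persistent h) {x : α} :
    force h false (.atom x) ↔ lamOf h x = .in_ := by
  have hpx := hp x
  rw [lamOf_eq_in_iff]
  simp only [force, Bool.false_eq_true, if_false]
  generalize h x = p at hpx ⊢
  rcases p with ⟨_ | _, _ | _⟩ <;> simp_all

lemma force_false_neg_atom_iff {x : α} : force h false (.neg (.atom x)) ↔ lamOf h x = .out := by
  rw [lamOf_eq_out_iff]
  simp only [force, Bool.forall_bool]
  rcases h x with ⟨_ | _, _ | _⟩ <;> simp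

lemma force_bigAnd {w : Bool} {L : List (Form α)} :
    force h w (bigAnd L) ↔ ∀ f ∈ L, force h w f := by
  induction L with
  | nil => simp [bigAnd, force]
  | cons a t ih => simp [bigAnd, force, ih]

lemma force_bigOr {w : Bool} {L : List (Form α)} :
    force h w (bigOr L) ↔ ∃ f ∈ L, force h w f := by
  induction L with
  | nil => simp [bigOr, force]
  | cons a t ih => simp [bigOr, force, ih]

variable [Fintype α] {R : α → α → Prop} [DecidableRel R]

lemma mem_attackers {x y : α} : y ∈ attackers R x ↔ R y x := by
  simp [attackers]

lemma force_false_attackers_out_iff {x : α} :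
    force h false (bigAnd ((attackers R x).map fun y => .neg (.atom y))) ↔
      ∀ y, R y x → lamOf h y = .out := by
  simp [force_bigAnd, mem_attackers, force_false_neg_atom_iff]

lemma force_false_attackers_in_iff (hp : Persistent h) {x : α} :
    force h false (bigOr ((attackers R x).map .atom)) ↔ ∃ y, R y x ∧ lamOf h y = .in_ := by
  simp [force_bigOr, mem_attackers, force_false_atom_iff hp]

end Forcing

section ModelsDelta

variable {α : Type} [Fintype α] {R : α → α → Prop} [DecidableRel R] {h : α → Bool × Bool}

lemma lamOf_eq_in_iff_of_modelsDelta (hp : Persistent h) (hm : ModelsDelta h R) (x : α) :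
    lamOf h x = .in_ ↔ ∀ y, R y x → lamOf h y = .out := by
  obtain ⟨ha1, ha2, -, -⟩ := hm x
  constructor
  · intro hx
    have := (ha1 false le_rfl ((force_false_atom_iff hp).2 hx)).resolve_left not_force_false_nconst
    exact force_false_attackers_out_iff.1 this
  · intro hall
    have := (ha2 false le_rfl (force_false_attackers_out_iff.2 hall)).resolve_left
      not_force_false_nconst
    exact (force_false_atom_iff hp).1 this

lemma lamOf_eq_out_iff_of_modelsDelta (hp : Persistent h) (hm : ModelsDelta h R) (x : α) :
    lamOf h x = .out ↔ ∃ y, R y x ∧ lamOf h y = .in_ := by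
  obtain ⟨-, -, hb1, hb2⟩ := hm x
  constructor
  · intro hx
    have := (hb1 false le_rfl (force_false_neg_atom_iff.2 hx)).resolve_left not_force_false_nconst
    exact (force_false_attackers_in_iff hp).1 this
  · intro hin
    have := (hb2 false le_rfl ((force_false_attackers_in_iff hp).2 hin)).resolve_right
      not_force_false_nconst
    exact force_false_neg_atom_iff.1 this

end ModelsDelta

theorem stmt0_general {α : Type} [Fintype α] (R : α → α → Prop) [DecidableRel R]
    (h : α → Bool × Bool) (hp : Persistent h) (hm : ModelsDelta h R) :
    IsCompleteExt R (lamOf h) :=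
  .of_in_iff_of_out_iff (lamOf_eq_in_iff_of_modelsDelta hp hm)
    (lamOf_eq_out_iff_of_modelsDelta hp hm)

/-- If `h` is a model of `Δ_A` (every formula of `Δ_A` holds at the actual
world `t`), then the labelling `λ_h` is a complete extension of `A = (S,R)`. -/
theorem stmt0 {α : Type} [Fintype α] [Nonempty α] (R : α → α → Prop) [DecidableRel R]
    (h : α → Bool × Bool) (hp : Persistent h) (hm : ModelsDelta h R) :
    IsCompleteExt R (lamOf h) :=
  stmt0_general R h hp hm
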